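/- arXiv:2510.26177 — 2 statements merged into one kernel-verified Lean document; each statement's English description precedes it below -/
import Mathlib

section
/- Let n ≥ 1, let Y ∈ ℝⁿ, let W be an n×n real matrix with det(Iₙ − ρW) ≠ 0, let X be an n×p real matrix with XᵀX invertible, and fix ρ ∈ ℝ such that σ̂²(ρ) > 0. Then for every β ∈ ℝᵖ and every σ² > 0, ℓ(ρ, β, σ²) ≤ ℓ(ρ, β̂(ρ), σ̂²(ρ)), and the maximal value equals the concentrated log-likelihood: ℓ(ρ, β̂(ρ), σ̂²(ρ)) = −n/2 − (n/2)·log 2π − (n/2)·log σ̂²(ρ) + log|det(Iₙ − ρW)|. -/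
open Matrix

/-- The Gaussian log-likelihood of the spatial lag model
`ℓ(ρ, β, σ²) = −(n/2)·log(2πσ²) + log|det(Iₙ − ρW)| − (1/(2σ²))·‖(Iₙ − ρW)Y − Xβ‖²`. -/
noncomputable def slmLogLik (n p : ℕ) (Y : Fin n → ℝ)
    (W : Matrix (Fin n) (Fin n) ℝ) (X : Matrix (Fin n) (Fin p) ℝ)
    (ρ : ℝ) (β : Fin p → ℝ) (σ2 : ℝ) : ℝ :=
  -((n : ℝ) / 2) * Real.log (2 * Real.pi * σ2)
    + Real.log |((1 : Matrix (Fin n) (Fin n) ℝ) - ρ • W).det|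
    - (1 / (2 * σ2)) *
      ((((1 : Matrix (Fin n) (Fin n) ℝ) - ρ • W).mulVec Y - X.mulVec β) ⬝ᵥ
        (((1 : Matrix (Fin n) (Fin n) ℝ) - ρ • W).mulVec Y - X.mulVec β))

/-- For fixed `ρ`, the log-likelihood is maximized at
`(β̂(ρ), σ̂²(ρ))`, and the maximal value is the concentrated log-likelihood
`−n/2 − (n/2)·log 2π − (n/2)·log σ̂²(ρ) + log|det(Iₙ − ρW)|`. -/
theorem slm_concentrated_loglik
    (n p : ℕ) (hn : 1 ≤ n)
    (Y : Fin n → ℝ)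
    (W : Matrix (Fin n) (Fin n) ℝ)
    (X : Matrix (Fin n) (Fin p) ℝ)
    (hX : IsUnit (Xᵀ * X))
    (ρ : ℝ)
    (hdet : ((1 : Matrix (Fin n) (Fin n) ℝ) - ρ • W).det ≠ 0)
    (βhat : Fin p → ℝ) (ehat : Fin n → ℝ) (σ2hat : ℝ)
    (hβhat : βhat = ((Xᵀ * X)⁻¹ * Xᵀ).mulVec (((1 : Matrix (Fin n) (Fin n) ℝ) - ρ • W).mulVec Y))
    (hehat : ehat = ((1 : Matrix (Fin n) (Fin n) ℝ) - ρ • W).mulVec Y - X.mulVec βhat)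
    (hσ2hat : σ2hat = (n : ℝ)⁻¹ * (ehat ⬝ᵥ ehat))
    (hσpos : 0 < σ2hat) :
    (∀ (β : Fin p → ℝ) (σ2 : ℝ), 0 < σ2 →
        slmLogLik n p Y W X ρ β σ2 ≤ slmLogLik n p Y W X ρ βhat σ2hat) ∧
      slmLogLik n p Y W X ρ βhat σ2hat =
        -((n : ℝ) / 2) - ((n : ℝ) / 2) * Real.log (2 * Real.pi)
          - ((n : ℝ) / 2) * Real.log σ2hat
          + Real.log |((1 : Matrix (Fin n) (Fin n) ℝ) - ρ • W).det| := by

  have hπ : (0:ℝ) < 2 * Real.pi := by positivity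
  have hn0 : (0:ℝ) < (n:ℝ) := by exact_mod_cast hn
  set A : Matrix (Fin n) (Fin n) ℝ := (1 : Matrix (Fin n) (Fin n) ℝ) - ρ • W with hA
  set v : Fin n → ℝ := A.mulVec Y with hv
  have hXdet : IsUnit (Xᵀ * X).det := (Matrix.isUnit_iff_isUnit_det _).mp hX
  have hinv : (Xᵀ * X) * (Xᵀ * X)⁻¹ = 1 := Matrix.mul_nonsing_inv _ hXdet
  have horth : Xᵀ.mulVec ehat = 0 := by
    rw [hehat, hβhat]
    simp only [Matrix.mulVec_sub, Matrix.mulVec_mulVec, ← Matrix.mul_assoc, hinv,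
      Matrix.one_mul, sub_self]
  have hcross : ∀ d : Fin p → ℝ, ehat ⬝ᵥ X.mulVec d = 0 := by
    intro d
    rw [Matrix.dotProduct_mulVec, ← Matrix.mulVec_transpose, horth]
    simp
  have hee : ehat ⬝ᵥ ehat = (n : ℝ) * σ2hat := by
    rw [hσ2hat]; field_simp
  have hSS : ∀ β : Fin p → ℝ, (v - X.mulVec β) ⬝ᵥ (v - X.mulVec β)
      = ehat ⬝ᵥ ehat + (X.mulVec (βhat - β)) ⬝ᵥ (X.mulVec (βhat - β)) := by
    intro β
    have hdecomp : v - X.mulVec β = ehat + X.mulVec (βhat - β) := by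
      rw [hehat, Matrix.mulVec_sub]; abel
    have hsymm : X.mulVec (βhat - β) ⬝ᵥ ehat = 0 := by
      rw [dotProduct_comm]; exact hcross _
    rw [hdecomp, add_dotProduct, dotProduct_add, dotProduct_add,
      hcross, hsymm]
    ring
  have hSSge : ∀ β : Fin p → ℝ, (n : ℝ) * σ2hat ≤ (v - X.mulVec β) ⬝ᵥ (v - X.mulVec β) := by
    intro β
    rw [hSS β, hee]
    have : (0:ℝ) ≤ (X.mulVec (βhat - β)) ⬝ᵥ (X.mulVec (βhat - β)) := by
      unfold dotProduct; exact Finset.sum_nonneg fun i _ => mul_self_nonneg _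
    linarith
  have heval : slmLogLik n p Y W X ρ βhat σ2hat =
      -((n : ℝ) / 2) - ((n : ℝ) / 2) * Real.log (2 * Real.pi)
        - ((n : ℝ) / 2) * Real.log σ2hat + Real.log |A.det| := by
    unfold slmLogLik
    rw [← hA, ← hv, ← hehat, hee, Real.log_mul (ne_of_gt hπ) (ne_of_gt hσpos)]
    field_simp
    ring
  refine ⟨?_, heval⟩
  intro β σ2 hσ2
  rw [heval]
  unfold slmLogLik
  rw [← hA, ← hv, Real.log_mul (ne_of_gt hπ) (ne_of_gt hσ2)]
  have h1 : (1 / (2 * σ2)) * ((n : ℝ) * σ2hat) ≤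
      (1 / (2 * σ2)) * ((v - X.mulVec β) ⬝ᵥ (v - X.mulVec β)) := by
    apply mul_le_mul_of_nonneg_left (hSSge β)
    positivity
  have hlog : Real.log (σ2hat / σ2) ≤ σ2hat / σ2 - 1 :=
    Real.log_le_sub_one_of_pos (by positivity)
  rw [Real.log_div (ne_of_gt hσpos) (ne_of_gt hσ2)] at hlog
  have key : -((n : ℝ) / 2) * Real.log σ2 - (1 / (2 * σ2)) * ((n : ℝ) * σ2hat) ≤
      -((n : ℝ) / 2) - ((n : ℝ) / 2) * Real.log σ2hat := by
    have h2 : (n : ℝ) / 2 * (Real.log σ2hat - Real.log σ2) ≤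
        (n : ℝ) / 2 * (σ2hat / σ2 - 1) := by
      apply mul_le_mul_of_nonneg_left hlog
      positivity
    have h3 : (n : ℝ) / 2 * (σ2hat / σ2) = (1 / (2 * σ2)) * ((n : ℝ) * σ2hat) := by
      field_simp
    nlinarith
  linarith
end

section
/- Under the Fisher-block setup: for any δ ∈ ℝᵖ, V_ρ ∈ ℝ and V_β ∈ ℝᵖ, set C = δ + Q(V_β − I_{βρ}I_{ρρ}⁻¹V_ρ) and G_S = Π_Sᵀ Q_S Π_S Q⁻¹. Then 𝓘_S⁻¹ applied to the (1+s)-vector (I_{ρβ}δ + V_ρ, Π_S I_{ββ}δ + Π_S V_β) has first (scalar) component I_{ρρ}⁻¹ I_{ρβ}(I_p − G_S)δ + I_{ρρ}⁻¹ V_ρ − I_{ρρ}⁻¹ I_{ρβ} G_S (C − δ), and remaining s-vector component Q_S Π_S Q⁻¹ C. -/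
open Matrix

lemma posDef_submatrix_inj {m n : Type*} [Fintype m] [Fintype n] [DecidableEq n] [DecidableEq m]
    {M : Matrix n n ℝ} (hM : M.PosDef) {g : m → n} (hg : Function.Injective g) :
    (M.submatrix g g).PosDef := by
  classical
  rw [posDef_iff_dotProduct_mulVec]
  constructor
  · ext i j
    have := congrFun (congrFun hM.1 (g i)) (g j)
    simpa [Matrix.conjTranspose_apply] using this
  · intro x hx
    set y : n → ℝ := fun j => ∑ i, if g i = j then x i else 0 with hy
    have hyg : ∀ i, y (g i) = x i := by
      intro i
      simp only [hy]
      rw [Finset.sum_eq_single i]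
      · simp
      · intro b _ hb
        simp only [ite_eq_right_iff]
        intro h; exact absurd (hg h) hb
      · simp
    have hy0 : y ≠ 0 := by
      intro h
      obtain ⟨i, hi⟩ := Function.ne_iff.mp hx
      exact hi (by rw [← hyg i, h]; rfl)
    have hsum : ∀ F : n → ℝ, ∑ j, y j * F j = ∑ i, x i * F (g i) := by
      intro F
      simp only [hy, Finset.sum_mul, ite_mul, zero_mul]
      rw [Finset.sum_comm]
      simp [Finset.sum_ite_eq]
    have key : star x ⬝ᵥ (M.submatrix g g) *ᵥ x = star y ⬝ᵥ M *ᵥ y := by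
      simp only [dotProduct, mulVec, star_trivial, Pi.star_apply, submatrix_apply]
      rw [hsum fun j => ∑ j', M j j' * y j']
      refine Finset.sum_congr rfl fun i _ => ?_
      congr 1
      rw [show (∑ j', M (g i) j' * y j') = ∑ j', y j' * M (g i) j' by
            exact Finset.sum_congr rfl fun j _ => mul_comm _ _,
        hsum fun j' => M (g i) j']
      exact Finset.sum_congr rfl fun i' _ => mul_comm _ _
    rw [key]
    exact hM.dotProduct_mulVec_pos hy0

/-- Under the Fisher-block setup, with
`C = δ + Q(V_β − I_{βρ}I_{ρρ}⁻¹V_ρ)` and `G_S = Π_Sᵀ Q_S Π_S Q⁻¹`, the vector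
`𝓘_S⁻¹ (I_{ρβ}δ + V_ρ, Π_S I_{ββ}δ + Π_S V_β)` has first component
`I_{ρρ}⁻¹ I_{ρβ}(I_p − G_S)δ + I_{ρρ}⁻¹ V_ρ − I_{ρρ}⁻¹ I_{ρβ} G_S (C − δ)` and
remaining `s`-vector component `Q_S Π_S Q⁻¹ C`. -/
theorem submodel_mle_limit_representation
    (p s : ℕ)
    (Iρρ : Matrix (Fin 1) (Fin 1) ℝ)
    (Iρβ : Matrix (Fin 1) (Fin p) ℝ)
    (Iβρ : Matrix (Fin p) (Fin 1) ℝ)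
    (Iββ : Matrix (Fin p) (Fin p) ℝ)
    (hsym : Iβρ = Iρβᵀ)
    (hpos : (Matrix.fromBlocks Iρρ Iρβ Iβρ Iββ).PosDef)
    (PiS : Matrix (Fin s) (Fin p) ℝ)
    (f : Fin s → Fin p) (hf : Function.Injective f)
    (hPiS : ∀ (a : Fin s) (j : Fin p), PiS a j = if f a = j then 1 else 0)
    (Q : Matrix (Fin p) (Fin p) ℝ)
    (hQ : Q = (Iββ - Iβρ * Iρρ⁻¹ * Iρβ)⁻¹)
    (QS : Matrix (Fin s) (Fin s) ℝ)
    (hQS : QS = (PiS * Q⁻¹ * PiSᵀ)⁻¹)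
    (𝓘S : Matrix (Fin 1 ⊕ Fin s) (Fin 1 ⊕ Fin s) ℝ)
    (h𝓘S : 𝓘S = Matrix.fromBlocks Iρρ (Iρβ * PiSᵀ) (PiS * Iβρ) (PiS * Iββ * PiSᵀ))
    (δ : Fin p → ℝ) (Vρ : Fin 1 → ℝ) (Vβ : Fin p → ℝ)
    (C : Fin p → ℝ)
    (hC : C = δ + Q.mulVec (Vβ - Iβρ.mulVec (Iρρ⁻¹.mulVec Vρ)))
    (GS : Matrix (Fin p) (Fin p) ℝ)
    (hGS : GS = PiSᵀ * QS * PiS * Q⁻¹) :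
    𝓘S⁻¹.mulVec
        (Sum.elim (Iρβ.mulVec δ + Vρ) ((PiS * Iββ).mulVec δ + PiS.mulVec Vβ)) =
      Sum.elim
        ((Iρρ⁻¹ * Iρβ * ((1 : Matrix (Fin p) (Fin p) ℝ) - GS)).mulVec δ
          + Iρρ⁻¹.mulVec Vρ
          - (Iρρ⁻¹ * Iρβ * GS).mulVec (C - δ))
        ((QS * PiS * Q⁻¹).mulVec C) := by
  classical
  -- entry computations for PiS
  have hPiSmul : ∀ (q : ℕ) (B : Matrix (Fin p) (Fin q) ℝ) (a : Fin s) (j : Fin q),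
      (PiS * B) a j = B (f a) j := by
    intro q B a j
    simp [Matrix.mul_apply, hPiS, ite_mul]
  have hmulPiT : ∀ (q : ℕ) (B : Matrix (Fin q) (Fin p) ℝ) (i : Fin q) (a : Fin s),
      (B * PiSᵀ) i a = B i (f a) := by
    intro q B i a
    simp [Matrix.mul_apply, hPiS, mul_ite]
  -- Iρρ is positive definite
  have hIρρ : Iρρ.PosDef := by
    have h : Iρρ = (Matrix.fromBlocks Iρρ Iρβ Iβρ Iββ).submatrix Sum.inl Sum.inl := by
      ext i j; rfl
    rw [h]; exact posDef_submatrix_inj hpos Sum.inl_injective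
  have hIρρdet : IsUnit Iρρ.det := (Matrix.isUnit_iff_isUnit_det _).mp hIρρ.isUnit
  have hIρρ1 : Iρρ * Iρρ⁻¹ = 1 := Matrix.mul_nonsing_inv _ hIρρdet
  haveI : Invertible Iρρ := Iρρ.invertibleOfIsUnitDet hIρρdet
  -- hermitian facts
  have hB : Iβρ = Iρβᴴ := by
    rw [hsym]; ext i j; simp [Matrix.conjTranspose_apply]
  have h𝓘H : (Matrix.fromBlocks Iρρ Iρβ Iρβᴴ Iββ).IsHermitian := by
    rw [← hB]; exact hpos.1
  have hSH : (Iββ - Iβρ * Iρρ⁻¹ * Iρβ).IsHermitian := by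
    have := (Matrix.IsHermitian.fromBlocks₁₁ Iρβ Iββ hIρρ.1).mp h𝓘H
    rwa [← hB] at this
  -- Schur complement is positive definite
  have hSpos : (Iββ - Iβρ * Iρρ⁻¹ * Iρβ).PosDef := by
    refine posDef_iff_dotProduct_mulVec.mpr ⟨hSH, fun y hy => ?_⟩
    have hz : (Sum.elim (-((Iρρ⁻¹ * Iρβ) *ᵥ y)) y : Fin 1 ⊕ Fin p → ℝ) ≠ 0 := by
      intro h
      apply hy
      funext j
      exact congrFun h (Sum.inr j)
    have hpos2 := hpos.dotProduct_mulVec_pos hz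
    rw [dotProduct_mulVec] at hpos2
    have heq := Matrix.schur_complement_eq₁₁ Iρβ Iββ (-((Iρρ⁻¹ * Iρβ) *ᵥ y)) y hIρρ.1
    rw [← hB] at heq
    rw [heq] at hpos2
    simp only [neg_add_cancel, star_zero, zero_vecMul, zero_dotProduct, zero_add] at hpos2
    rw [dotProduct_mulVec]
    exact hpos2
  -- Q facts
  have hSdet : IsUnit (Iββ - Iβρ * Iρρ⁻¹ * Iρβ).det :=
    (Matrix.isUnit_iff_isUnit_det _).mp hSpos.isUnit
  have hQinv : Q⁻¹ = Iββ - Iβρ * Iρρ⁻¹ * Iρβ := by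
    rw [hQ, Matrix.nonsing_inv_nonsing_inv _ hSdet]
  have hQQ : Q⁻¹ * Q = 1 := by
    rw [hQinv, hQ]; exact Matrix.mul_nonsing_inv _ hSdet
  have hIββ : Iββ = Q⁻¹ + Iβρ * Iρρ⁻¹ * Iρβ := by
    rw [hQinv]; abel
  -- QS facts
  have hW : PiS * Q⁻¹ * PiSᵀ = (Iββ - Iβρ * Iρρ⁻¹ * Iρβ).submatrix f f := by
    ext a b
    rw [hmulPiT s (PiS * Q⁻¹) a b, hPiSmul p Q⁻¹ a (f b), hQinv, Matrix.submatrix_apply]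
  have hWpos : (PiS * Q⁻¹ * PiSᵀ).PosDef := by
    rw [hW]; exact posDef_submatrix_inj hSpos hf
  have hWdet : IsUnit (PiS * Q⁻¹ * PiSᵀ).det :=
    (Matrix.isUnit_iff_isUnit_det _).mp hWpos.isUnit
  have hWQS : PiS * Q⁻¹ * PiSᵀ * QS = 1 := by
    rw [hQS]; exact Matrix.mul_nonsing_inv _ hWdet
  -- cancellation lemmas in vector form
  have hcanρ : ∀ v : Fin 1 → ℝ, Iρρ *ᵥ (Iρρ⁻¹ *ᵥ v) = v := by
    intro v; rw [Matrix.mulVec_mulVec, hIρρ1, Matrix.one_mulVec]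
  have hcanS : ∀ v : Fin s → ℝ, PiS *ᵥ (Q⁻¹ *ᵥ (PiSᵀ *ᵥ (QS *ᵥ v))) = v := by
    intro v
    rw [Matrix.mulVec_mulVec, Matrix.mulVec_mulVec, Matrix.mulVec_mulVec, hWQS,
      Matrix.one_mulVec]
  -- rearranged hC
  have hVβ : Vβ = Q⁻¹ *ᵥ (C - δ) + Iβρ *ᵥ (Iρρ⁻¹ *ᵥ Vρ) := by
    have h1 : C - δ = Q *ᵥ (Vβ - Iβρ *ᵥ (Iρρ⁻¹ *ᵥ Vρ)) := by
      rw [hC]; abel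
    rw [h1, Matrix.mulVec_mulVec, hQQ, Matrix.one_mulVec]
    abel
  -- 𝓘S is positive definite
  have h𝓘Ssub : 𝓘S = (Matrix.fromBlocks Iρρ Iρβ Iβρ Iββ).submatrix
      (Sum.map id f) (Sum.map id f) := by
    rw [h𝓘S]
    ext i j
    rcases i with i | a <;> rcases j with j | b <;>
      simp [Matrix.fromBlocks, hPiSmul, hmulPiT]
  have h𝓘Spos : 𝓘S.PosDef := by
    rw [h𝓘Ssub]
    exact posDef_submatrix_inj hpos (Function.Injective.sumMap Function.injective_id hf)
  have h𝓘Sdet : IsUnit 𝓘S.det := (Matrix.isUnit_iff_isUnit_det _).mp h𝓘Spos.isUnit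
  have hinv𝓘S : 𝓘S⁻¹ * 𝓘S = 1 := Matrix.nonsing_inv_mul _ h𝓘Sdet
  -- main computation
  set W1 : Fin 1 → ℝ :=
    (Iρρ⁻¹ * Iρβ * ((1 : Matrix (Fin p) (Fin p) ℝ) - GS)).mulVec δ
      + Iρρ⁻¹.mulVec Vρ - (Iρρ⁻¹ * Iρβ * GS).mulVec (C - δ) with hW1
  set W2 : Fin s → ℝ := (QS * PiS * Q⁻¹).mulVec C with hW2
  suffices key : 𝓘S *ᵥ (Sum.elim W1 W2) =
      Sum.elim (Iρβ.mulVec δ + Vρ) ((PiS * Iββ).mulVec δ + PiS.mulVec Vβ) by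
    rw [← key, Matrix.mulVec_mulVec, hinv𝓘S, Matrix.one_mulVec]
  have key1 : Iρρ *ᵥ W1 + (Iρβ * PiSᵀ) *ᵥ W2 = Iρβ.mulVec δ + Vρ := by
    rw [hW1, hW2, hGS]
    simp only [← Matrix.mulVec_mulVec, Matrix.mulVec_add, Matrix.mulVec_sub,
      Matrix.add_mulVec, Matrix.sub_mulVec, Matrix.one_mulVec, hcanρ, hcanS]
    abel
  have key2 : (PiS * Iβρ) *ᵥ W1 + (PiS * Iββ * PiSᵀ) *ᵥ W2 =
      (PiS * Iββ).mulVec δ + PiS.mulVec Vβ := by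
    rw [hW1, hW2, hGS, hVβ, hIββ]
    simp only [← Matrix.mulVec_mulVec, Matrix.mulVec_add, Matrix.mulVec_sub,
      Matrix.add_mulVec, Matrix.sub_mulVec, Matrix.one_mulVec, hcanρ, hcanS]
    abel
  rw [h𝓘S, Matrix.fromBlocks_mulVec, Sum.elim_comp_inl, Sum.elim_comp_inr, key1, key2]
end
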